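/- For every prime ℓ > 7 and every integer a with a² ≤ 8 (so a ∈ {0, ±1, ±2}), and also for a = ±3, the congruence 1·2^((ℓ−3)/2) ≡ a (mod ℓ) is impossible; consequently there is no elliptic curve trace value c₂ ∈ {0,±1,±2} and no semistable trace ±3 matching the twisted trace at 2. -/

import Mathlib

/-! Write `k = (ℓ - 3) / 2`. If `2 ^ k = c` in `ZMod ℓ`, then `2 * c = 2 ^ (ℓ / 2) = ±1` by Euler's
criterion, so `ℓ` divides the odd integer `2 * c ∓ 1`; but `|2 * c ∓ 1| ≤ 7 < ℓ`. -/

theorem ZMod.intCast_ne_zero_of_abs_lt {n : ℕ} {m : ℤ} (hm : m ≠ 0) (h : |m| < n) :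
    (m : ZMod n) ≠ 0 := by
  rw [Ne, ZMod.intCast_zmod_eq_zero_iff_dvd]
  exact fun hdvd => hm (Int.eq_zero_of_abs_lt_dvd hdvd h)

theorem mul_pow_sub_three_div_two {M : Type*} [Monoid M] {n : ℕ} (hn : 3 ≤ n) (hodd : Odd n)
    (a : M) : a * a ^ ((n - 3) / 2) = a ^ (n / 2) := by
  obtain ⟨m, rfl⟩ := hodd
  rw [← pow_succ']
  congr 1
  omega

theorem stmt_15 : ∀ ℓ : ℕ, ℓ.Prime → 7 < ℓ → ∀ c : ℤ, |c| ≤ 3 →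
    (2 : ZMod ℓ) ^ ((ℓ - 3) / 2) ≠ (c : ZMod ℓ) := by
  intro ℓ hℓ hℓ7 c hc hpow
  have := Fact.mk hℓ
  obtain ⟨hc_lo, hc_hi⟩ := abs_le.mp hc
  have htwo : (2 : ZMod ℓ) ≠ 0 := by
    exact_mod_cast ZMod.intCast_ne_zero_of_abs_lt (n := ℓ) (m := 2) two_ne_zero
      (abs_lt.mpr ⟨by omega, by omega⟩)
  have heuler : (2 : ZMod ℓ) * c = 2 ^ (ℓ / 2) := by
    rw [← hpow, mul_pow_sub_three_div_two (by omega) (hℓ.odd_of_ne_two (by omega))]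
  rcases ZMod.pow_div_two_eq_neg_one_or_one ℓ htwo with hone | hone
  · refine ZMod.intCast_ne_zero_of_abs_lt (n := ℓ) (m := 2 * c - 1) (by omega)
      (abs_lt.mpr ⟨by omega, by omega⟩) ?_
    push_cast
    rw [heuler, hone, sub_self]
  · refine ZMod.intCast_ne_zero_of_abs_lt (n := ℓ) (m := 2 * c + 1) (by omega)
      (abs_lt.mpr ⟨by omega, by omega⟩) ?_
    push_cast
    rw [heuler, hone, neg_add_cancel]
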